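/- For a positive definite Hermitian matrix E ∈ ℂ^{n×n}, the function Λ ↦ tr(Λ E) - log det(Λ) over positive definite Hermitian Λ is uniquely minimized at Λ = E^{-1}, with minimum value n + log det(E). -/

import Mathlib

open Matrix ComplexOrder
open scoped MatrixOrder

/-!
With `S = √E`, the objective at `Λ` equals `tr M - log det M + log det E` for the positive
definite `M = S Λ S`, since `tr (S Λ S) = tr (Λ E)` and `det (S Λ S) = det Λ det E`. In the
eigenvalues `μᵢ > 0` of `M`, `tr M - log det M = ∑ (μᵢ - log μᵢ) ≥ n` because `x - log x ≥ 1`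
with equality only at `x = 1`; so the minimum `n + log det E` is attained exactly when `M = 1`,
that is, when `Λ = E⁻¹`.
-/

namespace Real

lemma one_le_sub_log {x : ℝ} (hx : 0 < x) : 1 ≤ x - log x := by
  linarith [log_le_sub_one_of_pos hx]

lemma sub_log_eq_one_iff {x : ℝ} (hx : 0 < x) : x - log x = 1 ↔ x = 1 := by
  refine ⟨fun h => ?_, fun h => by simp [h]⟩
  by_contra hx1
  linarith [log_lt_sub_one_of_pos hx hx1]

end Real

namespace Matrix

variable {𝕜 n : Type*} [RCLike 𝕜] [Fintype n] [DecidableEq n]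

noncomputable def traceSubLogDet (M : Matrix n n 𝕜) : ℝ :=
  RCLike.re M.trace - Real.log (RCLike.re M.det)

lemma traceSubLogDet_mul_comm (A B : Matrix n n 𝕜) :
    traceSubLogDet (A * B) = traceSubLogDet (B * A) := by
  rw [traceSubLogDet, traceSubLogDet, trace_mul_comm, det_mul_comm]

lemma traceSubLogDet_one : traceSubLogDet (1 : Matrix n n 𝕜) = Fintype.card n := by
  simp [traceSubLogDet]

lemma IsHermitian.eq_one_of_eigenvalues_eq_one {M : Matrix n n 𝕜} (hM : M.IsHermitian)
    (h : ∀ i, hM.eigenvalues i = 1) : M = 1 := by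
  rw [hM.spectral_theorem,
    show RCLike.ofReal ∘ hM.eigenvalues = 1 from funext fun i => by simp [h i],
    Pi.one_def, diagonal_one, map_one]

lemma PosDef.traceSubLogDet_eq_sum_eigenvalues {M : Matrix n n 𝕜} (hM : M.PosDef) :
    traceSubLogDet M = ∑ i, (hM.1.eigenvalues i - Real.log (hM.1.eigenvalues i)) := by
  rw [traceSubLogDet, hM.1.trace_eq_sum_eigenvalues, hM.1.det_eq_prod_eigenvalues,
    ← RCLike.ofReal_sum, ← RCLike.ofReal_prod, RCLike.ofReal_re, RCLike.ofReal_re,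
    Real.log_prod fun i _ => (hM.eigenvalues_pos i).ne', Finset.sum_sub_distrib]

lemma PosDef.card_le_traceSubLogDet {M : Matrix n n 𝕜} (hM : M.PosDef) :
    (Fintype.card n : ℝ) ≤ traceSubLogDet M := by
  calc (Fintype.card n : ℝ) = ∑ _i : n, (1 : ℝ) := by simp
    _ ≤ traceSubLogDet M :=
      hM.traceSubLogDet_eq_sum_eigenvalues ▸
        Finset.sum_le_sum fun i _ => Real.one_le_sub_log (hM.eigenvalues_pos i)

lemma PosDef.eq_one_of_traceSubLogDet_eq_card {M : Matrix n n 𝕜} (hM : M.PosDef)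
    (h : traceSubLogDet M = Fintype.card n) : M = 1 := by
  rw [hM.traceSubLogDet_eq_sum_eigenvalues, ← Finset.card_univ, ← nsmul_one, ← Finset.sum_const,
    eq_comm, Finset.sum_eq_sum_iff_of_le fun i _ => Real.one_le_sub_log (hM.eigenvalues_pos i)] at h
  exact hM.1.eq_one_of_eigenvalues_eq_one fun i =>
    (Real.sub_log_eq_one_iff (hM.eigenvalues_pos i)).mp (h i (Finset.mem_univ i)).symm

lemma PosDef.traceSubLogDet_mul {Λ E : Matrix n n 𝕜} (hΛ : Λ.PosDef) (hE : E.PosDef) :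
    traceSubLogDet (Λ * E) =
      RCLike.re (Λ * E).trace - Real.log (RCLike.re Λ.det) - Real.log (RCLike.re E.det) := by
  obtain ⟨a, ha, hdetΛ⟩ := RCLike.pos_iff_exists_ofReal.mp hΛ.det_pos
  obtain ⟨b, hb, hdetE⟩ := RCLike.pos_iff_exists_ofReal.mp hE.det_pos
  rw [traceSubLogDet, det_mul, ← hdetΛ, ← hdetE, ← RCLike.ofReal_mul, RCLike.ofReal_re,
    RCLike.ofReal_re, RCLike.ofReal_re, Real.log_mul ha.ne' hb.ne', sub_sub]

lemma PosDef.sqrt_mul_mul_sqrt {Λ E : Matrix n n 𝕜} (hΛ : Λ.PosDef) (hE : E.PosDef) :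
    (CFC.sqrt E * Λ * CFC.sqrt E).PosDef := by
  have hS : (CFC.sqrt E).PosDef := (IsStrictlyPositive.sqrt E hE.isStrictlyPositive).posDef
  simpa only [hS.1.eq] using
    hΛ.conjTranspose_mul_mul_same (mulVec_injective_iff_isUnit.mpr hS.isUnit)

lemma traceSubLogDet_sqrt_mul_mul_sqrt (Λ : Matrix n n 𝕜) {E : Matrix n n 𝕜} (hE : 0 ≤ E) :
    traceSubLogDet (CFC.sqrt E * Λ * CFC.sqrt E) = traceSubLogDet (Λ * E) := by
  rw [mul_assoc, traceSubLogDet_mul_comm, mul_assoc, CFC.sqrt_mul_sqrt_self E]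

lemma PosDef.card_le_traceSubLogDet_mul {Λ E : Matrix n n 𝕜} (hΛ : Λ.PosDef) (hE : E.PosDef) :
    (Fintype.card n : ℝ) ≤ traceSubLogDet (Λ * E) :=
  traceSubLogDet_sqrt_mul_mul_sqrt Λ hE.posSemidef.nonneg ▸
    (hΛ.sqrt_mul_mul_sqrt hE).card_le_traceSubLogDet

lemma PosDef.eq_inv_of_traceSubLogDet_mul_eq_card {Λ E : Matrix n n 𝕜} (hΛ : Λ.PosDef)
    (hE : E.PosDef) (h : traceSubLogDet (Λ * E) = Fintype.card n) : Λ = E⁻¹ := by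
  set S := CFC.sqrt E
  have hSΛS : S * Λ * S = 1 := (hΛ.sqrt_mul_mul_sqrt hE).eq_one_of_traceSubLogDet_eq_card
    (by rwa [traceSubLogDet_sqrt_mul_mul_sqrt Λ hE.posSemidef.nonneg])
  have hS : IsUnit S := (IsStrictlyPositive.sqrt E hE.isStrictlyPositive).isUnit
  have hΛE : Λ * E = 1 := hS.mul_left_cancel <| by
    rw [mul_one, ← CFC.sqrt_mul_sqrt_self E hE.posSemidef.nonneg, ← mul_assoc, ← mul_assoc, hSΛS,
      one_mul]
  exact (inv_eq_left_inv hΛE).symm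

end Matrix

/-- For Hermitian positive definite `E`, the function `Λ ↦ tr(Λ E) - log det Λ` over
Hermitian positive definite `Λ` is uniquely minimized at `Λ = E⁻¹`, with minimum
value `n + log det E`. -/
theorem wmmse_optimal_weight (n : ℕ) (E : Matrix (Fin n) (Fin n) ℂ) (hE : E.PosDef) :
    (∀ Λ : Matrix (Fin n) (Fin n) ℂ, Λ.PosDef →
      (Matrix.trace (E⁻¹ * E)).re - Real.log ((E⁻¹).det.re)
        ≤ (Matrix.trace (Λ * E)).re - Real.log (Λ.det.re)) ∧
    (∀ Λ : Matrix (Fin n) (Fin n) ℂ, Λ.PosDef →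
      (Matrix.trace (Λ * E)).re - Real.log (Λ.det.re)
        = (Matrix.trace (E⁻¹ * E)).re - Real.log ((E⁻¹).det.re) → Λ = E⁻¹) ∧
    (Matrix.trace (E⁻¹ * E)).re - Real.log ((E⁻¹).det.re)
      = n + Real.log (E.det.re) := by
  have hobj : ∀ Λ : Matrix (Fin n) (Fin n) ℂ, Λ.PosDef →
      (Λ * E).trace.re - Real.log Λ.det.re = traceSubLogDet (Λ * E) + Real.log E.det.re :=
    fun Λ hΛ => by rw [hΛ.traceSubLogDet_mul hE]; simp
  have hmin : traceSubLogDet (E⁻¹ * E) = n := by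
    rw [nonsing_inv_mul E ((isUnit_iff_isUnit_det E).mp hE.isUnit), traceSubLogDet_one,
      Fintype.card_fin]
  rw [hobj _ hE.inv, hmin]
  refine ⟨fun Λ hΛ => ?_, fun Λ hΛ h => ?_, rfl⟩
  · rw [hobj Λ hΛ]
    simpa using hΛ.card_le_traceSubLogDet_mul hE
  · rw [hobj Λ hΛ, add_left_inj] at h
    exact hΛ.eq_inv_of_traceSubLogDet_mul_eq_card hE (by simpa using h)
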